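/- Let S₁ and S₂ be positive semidefinite Hermitian operators on a finite-dimensional complex inner product space H and E an orthogonal projection with S₁E = S₁ and S₂E = S₂. Then the optimal two-pattern identification value satisfies sup{Tr(S₁D₁) + Tr(S₂D₂) : D₁ ≥ 0, D₂ ≥ 0, D₁ + D₂ ≤ E} = Tr(S₂E) + Tr((S₁ − S₂)₊), and the supremum is attained at D₁° = E₊ (the orthogonal projection onto the span of eigenvectors of C = S₁ − S₂ with positive eigenvalues) and D₂° = E − D₁°. -/

import Mathlib

open Matrix
open scoped ComplexOrder

noncomputable section

/-- The positive part `C₊ = ∑_{κ i > 0} κ i |χ i⟩⟨χ i|` of the contrast operator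
`C = S₁ − S₂` with spectral data `(χ, κ)`. -/
noncomputable def posPartM {n : ℕ} (χ : Fin n → (Fin n → ℂ)) (κ : Fin n → ℝ) :
    Matrix (Fin n) (Fin n) ℂ :=
  ∑ i ∈ Finset.univ.filter (fun i => 0 < κ i),
    (κ i : ℂ) • Matrix.vecMulVec (χ i) (star (χ i))

/-- The orthogonal projection `E₊` onto the span of the eigenvectors of `C = S₁ − S₂`
with positive eigenvalues. -/
noncomputable def posProjM {n : ℕ} (χ : Fin n → (Fin n → ℂ)) (κ : Fin n → ℝ) :
    Matrix (Fin n) (Fin n) ℂ :=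
  ∑ i ∈ Finset.univ.filter (fun i => 0 < κ i), Matrix.vecMulVec (χ i) (star (χ i))

/-!
With `C = S₁ − S₂` one has `Tr (S₁D₁) + Tr (S₂D₂) = Tr (S₂(D₁ + D₂)) + Tr (CD₁)`. The first term is
at most `Tr (S₂E)` because `S₂ ≥ 0` and `D₁ + D₂ ≤ E`. The second is `∑ κᵢ ⟨χᵢ, D₁χᵢ⟩`, and
`0 ≤ ⟨χᵢ, D₁χᵢ⟩ ≤ ⟨χᵢ, Eχᵢ⟩ = 1` when `κᵢ > 0`, because such `χᵢ` lie in the range of `C`, hence of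
`E`; so it is at most `∑_{κᵢ > 0} κᵢ = Tr C₊`. Both bounds are attained by the orthogonal projections
`D₁ = E₊` and `D₂ = E − E₊`.
-/

namespace Matrix

variable {m 𝕜 : Type*} [Fintype m] [RCLike 𝕜]

theorem trace_vecMulVec_star_mul (v : m → 𝕜) (A : Matrix m m 𝕜) :
    (vecMulVec v (star v) * A).trace = star v ⬝ᵥ (A *ᵥ v) := by
  rw [trace_mul_comm, mul_vecMulVec, trace_vecMulVec, dotProduct_comm]

theorem PosSemidef.trace_mul_nonneg {A B : Matrix m m 𝕜} (hA : A.PosSemidef)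
    (hB : B.PosSemidef) : 0 ≤ (A * B).trace := by
  obtain ⟨k, v, rfl⟩ := posSemidef_iff_eq_sum_vecMulVec.mp hA
  rw [Finset.sum_mul, trace_sum]
  exact Finset.sum_nonneg fun i _ =>
    trace_vecMulVec_star_mul (v i) B ▸ hB.dotProduct_mulVec_nonneg (v i)

theorem PosSemidef.trace_mul_le_trace_mul {A B C : Matrix m m 𝕜} (hA : A.PosSemidef)
    (hBC : (C - B).PosSemidef) : (A * B).trace ≤ (A * C).trace := by
  rw [← sub_nonneg, ← trace_sub, ← mul_sub]
  exact hA.trace_mul_nonneg hBC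

theorem dotProduct_mulVec_le_of_posSemidef_sub {A B : Matrix m m 𝕜}
    (hAB : (B - A).PosSemidef) (v : m → 𝕜) :
    star v ⬝ᵥ (A *ᵥ v) ≤ star v ⬝ᵥ (B *ᵥ v) := by
  rw [← sub_nonneg, ← dotProduct_sub, ← sub_mulVec]
  exact hAB.dotProduct_mulVec_nonneg v

open scoped MatrixOrder in
theorem _root_.IsStarProjection.posSemidef {P : Matrix m m 𝕜} (hP : IsStarProjection P) :
    P.PosSemidef :=
  nonneg_iff_posSemidef.mp hP.nonneg

theorem trace_mul_add_trace_mul {R : Type*} [Ring R] (S₁ S₂ X Y : Matrix m m R) :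
    (S₁ * X).trace + (S₂ * Y).trace = (S₂ * (X + Y)).trace + ((S₁ - S₂) * X).trace := by
  rw [mul_add, sub_mul, trace_add, trace_sub]
  abel

theorem mulVec_eq_self_of_star_vecMul_eq_smul {C E : Matrix m m 𝕜} (hE : E.IsHermitian)
    (hCE : C * E = C) {v : m → 𝕜} {c : 𝕜} (hc : c ≠ 0) (hv : star v ᵥ* C = c • star v) :
    E *ᵥ v = v := by
  have hvE : star v ᵥ* E = star v := by
    refine smul_right_injective _ hc (?_ : c • (star v ᵥ* E) = c • star v)
    rw [← smul_vecMul, ← hv, vecMul_vecMul, hCE]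
  calc E *ᵥ v = star (star v ᵥ* E) := by rw [star_vecMul, hE.eq, star_star]
    _ = v := by rw [hvE, star_star]

end Matrix

section Spectral

variable {ι m : Type*} [Fintype m] {χ : ι → m → ℂ} (κ : ι → ℝ)

theorem star_vecMul_sum_smul_vecMulVec [Fintype ι] [DecidableEq ι]
    (hON : ∀ i j, star (χ i) ⬝ᵥ χ j = if i = j then 1 else 0) (j : ι) :
    star (χ j) ᵥ* ∑ i, (κ i : ℂ) • vecMulVec (χ i) (star (χ i)) = (κ j : ℂ) • star (χ j) := by
  simp [vecMul_sum, vecMul_smul, vecMul_vecMulVec, hON]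

theorem trace_sum_smul_vecMulVec_mul (s : Finset ι) (A : Matrix m m ℂ) :
    ((∑ i ∈ s, (κ i : ℂ) • vecMulVec (χ i) (star (χ i))) * A).trace =
      ∑ i ∈ s, κ i * (star (χ i) ⬝ᵥ (A *ᵥ χ i)) := by
  simp only [Finset.sum_mul, trace_sum, smul_mul_assoc, trace_smul, trace_vecMulVec_star_mul,
    smul_eq_mul]

end Spectral

section PositivePart

variable {n : ℕ} {χ : Fin n → Fin n → ℂ} {κ : Fin n → ℝ}
  (hON : ∀ i j, star (χ i) ⬝ᵥ χ j = if i = j then 1 else 0)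
include hON

theorem trace_posPartM :
    (posPartM χ κ).trace = ∑ i ∈ Finset.univ.filter (fun i => 0 < κ i), (κ i : ℂ) := by
  simp [posPartM, trace_sum, dotProduct_comm (χ _), hON]

theorem isStarProjection_posProjM : IsStarProjection (posProjM χ κ) := by
  refine ⟨?_, ?_⟩
  · rw [IsIdempotentElem, posProjM, Finset.sum_mul]
    refine Finset.sum_congr rfl fun i hi => ?_
    rw [Finset.mul_sum, Finset.sum_eq_single_of_mem i hi fun j _ hji => ?_]
    · rw [vecMulVec_mul_vecMulVec, hON, if_pos rfl, one_smul]
    · rw [vecMulVec_mul_vecMulVec, hON, if_neg hji.symm, zero_smul, vecMulVec_zero]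
  · simp [IsSelfAdjoint, posProjM, star_sum, star_eq_conjTranspose, conjTranspose_vecMulVec]

theorem trace_mul_posProjM :
    ((∑ i, (κ i : ℂ) • vecMulVec (χ i) (star (χ i))) * posProjM χ κ).trace =
      (posPartM χ κ).trace := by
  rw [trace_mul_comm, posProjM, Finset.sum_mul, trace_sum, trace_posPartM hON]
  refine Finset.sum_congr rfl fun i _ => ?_
  rw [trace_vecMulVec_star_mul, dotProduct_mulVec, star_vecMul_sum_smul_vecMulVec κ hON,
    smul_dotProduct, hON, if_pos rfl, smul_eq_mul, mul_one]

theorem trace_mul_le_trace_posPartM {D : Matrix (Fin n) (Fin n) ℂ} (hD : D.PosSemidef)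
    (hD_le : ∀ i, 0 < κ i → star (χ i) ⬝ᵥ (D *ᵥ χ i) ≤ 1) :
    ((∑ i, (κ i : ℂ) • vecMulVec (χ i) (star (χ i))) * D).trace ≤ (posPartM χ κ).trace := by
  rw [trace_sum_smul_vecMulVec_mul, trace_posPartM hON, Finset.sum_filter]
  refine Finset.sum_le_sum fun i _ => ?_
  split_ifs with hκ
  · exact mul_le_of_le_one_right (by exact_mod_cast hκ.le) (hD_le i hκ)
  · exact mul_nonpos_of_nonpos_of_nonneg (by exact_mod_cast not_lt.mp hκ)
      (hD.dotProduct_mulVec_nonneg _)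

end PositivePart

theorem mul_posProjM {n : ℕ} {χ : Fin n → Fin n → ℂ} {κ : Fin n → ℝ}
    {E : Matrix (Fin n) (Fin n) ℂ} (hE : ∀ i, 0 < κ i → E *ᵥ χ i = χ i) :
    E * posProjM χ κ = posProjM χ κ := by
  rw [posProjM, Finset.mul_sum]
  refine Finset.sum_congr rfl fun i hi => ?_
  rw [mul_vecMulVec, hE i (Finset.mem_filter.mp hi).2]

theorem two_pattern_identification_general {n : ℕ}
    (S₁ S₂ E : Matrix (Fin n) (Fin n) ℂ)
    (hS₂ : S₂.PosSemidef)
    (hE : E.IsHermitian) (hEproj : E * E = E)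
    (h1E : S₁ * E = S₁) (h2E : S₂ * E = S₂)
    (χ : Fin n → (Fin n → ℂ)) (κ : Fin n → ℝ)
    (hON : ∀ i j, star (χ i) ⬝ᵥ χ j = if i = j then 1 else 0)
    (hspec : S₁ - S₂ = ∑ i, (κ i : ℂ) • Matrix.vecMulVec (χ i) (star (χ i))) :
    IsGreatest {t : ℝ | ∃ D₁ D₂ : Matrix (Fin n) (Fin n) ℂ,
        D₁.PosSemidef ∧ D₂.PosSemidef ∧ (E - (D₁ + D₂)).PosSemidef ∧
        t = ((S₁ * D₁).trace).re + ((S₂ * D₂).trace).re}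
      (((S₂ * E).trace).re + ((posPartM χ κ).trace).re) ∧
    (posProjM χ κ).PosSemidef ∧ (E - posProjM χ κ).PosSemidef ∧
    ((S₁ * posProjM χ κ).trace).re + ((S₂ * (E - posProjM χ κ)).trace).re =
      ((S₂ * E).trace).re + ((posPartM χ κ).trace).re := by
  have hEχ (i : Fin n) (hi : 0 < κ i) : E *ᵥ χ i = χ i :=
    mulVec_eq_self_of_star_vecMul_eq_smul hE (by rw [sub_mul, h1E, h2E])
      (Complex.ofReal_ne_zero.mpr hi.ne') (hspec ▸ star_vecMul_sum_smul_vecMulVec κ hON i)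
  have hP := isStarProjection_posProjM (κ := κ) hON
  have hEP := hP.sub_of_mul_eq_right ⟨hEproj, hE⟩ (mul_posProjM hEχ)
  have hvalue : (S₁ * posProjM χ κ).trace + (S₂ * (E - posProjM χ κ)).trace =
      (S₂ * E).trace + (posPartM χ κ).trace := by
    rw [trace_mul_add_trace_mul, add_sub_cancel, hspec, trace_mul_posProjM hON]
  have hbound (D₁ D₂ : Matrix (Fin n) (Fin n) ℂ) (hD₁ : D₁.PosSemidef) (hD₂ : D₂.PosSemidef)
      (hDE : (E - (D₁ + D₂)).PosSemidef) :
      (S₁ * D₁).trace + (S₂ * D₂).trace ≤ (S₂ * E).trace + (posPartM χ κ).trace := by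
    rw [trace_mul_add_trace_mul, hspec]
    refine add_le_add (hS₂.trace_mul_le_trace_mul hDE)
      (trace_mul_le_trace_posPartM hON hD₁ fun i hi => ?_)
    calc star (χ i) ⬝ᵥ (D₁ *ᵥ χ i) ≤ star (χ i) ⬝ᵥ (E *ᵥ χ i) :=
          dotProduct_mulVec_le_of_posSemidef_sub
            (by simpa [sub_add_eq_sub_sub] using hDE.add hD₂) _
      _ = 1 := by rw [hEχ i hi, hON, if_pos rfl]
  refine ⟨⟨⟨_, _, hP.posSemidef, hEP.posSemidef, by simpa using PosSemidef.zero,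
    by simpa using congrArg Complex.re hvalue.symm⟩, ?_⟩, hP.posSemidef, hEP.posSemidef,
    by simpa using congrArg Complex.re hvalue⟩
  rintro t ⟨D₁, D₂, hD₁, hD₂, hDE, rfl⟩
  simpa using (Complex.le_def.mp (hbound D₁ D₂ hD₁ hD₂ hDE)).1

/-- Optimal identification of two mixed wave patterns:
`sup {Tr (S₁D₁) + Tr (S₂D₂) : D₁, D₂ ≥ 0, D₁ + D₂ ≤ E} = Tr (S₂E) + Tr ((S₁ − S₂)₊)`,
attained at `D₁ = E₊`, `D₂ = E − E₊`. -/
theorem two_pattern_identification {n : ℕ}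
    (S₁ S₂ E : Matrix (Fin n) (Fin n) ℂ)
    (hS₁ : S₁.PosSemidef) (hS₂ : S₂.PosSemidef)
    (hE : E.IsHermitian) (hEproj : E * E = E)
    (h1E : S₁ * E = S₁) (h2E : S₂ * E = S₂)
    (χ : Fin n → (Fin n → ℂ)) (κ : Fin n → ℝ)
    (hON : ∀ i j, star (χ i) ⬝ᵥ χ j = if i = j then 1 else 0)
    (hspec : S₁ - S₂ = ∑ i, (κ i : ℂ) • Matrix.vecMulVec (χ i) (star (χ i))) :
    IsGreatest {t : ℝ | ∃ D₁ D₂ : Matrix (Fin n) (Fin n) ℂ,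
        D₁.PosSemidef ∧ D₂.PosSemidef ∧ (E - (D₁ + D₂)).PosSemidef ∧
        t = ((S₁ * D₁).trace).re + ((S₂ * D₂).trace).re}
      (((S₂ * E).trace).re + ((posPartM χ κ).trace).re) ∧
    (posProjM χ κ).PosSemidef ∧ (E - posProjM χ κ).PosSemidef ∧
    ((S₁ * posProjM χ κ).trace).re + ((S₂ * (E - posProjM χ κ)).trace).re =
      ((S₂ * E).trace).re + ((posPartM χ κ).trace).re :=
  two_pattern_identification_general S₁ S₂ E hS₂ hE hEproj h1E h2E χ κ hON hspec
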